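/- arXiv:2605.17872 — 4 statements merged into one kernel-verified Lean document; each statement's English description precedes it below -/
import Mathlib

section
/- For every integer n ≥ 2 and positive integer m, ∏_{k=1}^∞ (1 − n^{−k}) · n^{φ(m)} ≤ Φ_m(n) ≤ n^{φ(m)} / ∏_{k=1}^∞ (1 − n^{−k}). -/
/-!
For `x > 1`, Möbius inversion of `∏_{d ∣ k} Φ_d(x) / x^φ(d) = (x^k - 1) / x^k = 1 - x^{-k}` gives
`Φ_m(x) / x^φ(m) = ∏_{d ∣ m} (1 - x^{-d})^μ(m/d)`. Since `μ ∈ {-1, 0, 1}` and `0 < 1 - x^{-d} ≤ 1`,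
this product lies between `∏_{d ∣ m} (1 - x^{-d})` and its inverse, and the finite product over
the distinct `d ∣ m` dominates the full product `∏_{k ≥ 1} (1 - x^{-k})`, which is positive because
`∑ x^{-k}` converges.
-/

open Polynomial Finset
open scoped ArithmeticFunction.Moebius

namespace Real

variable {ι : Type*} {f : ι → ℝ}

theorem tprod_one_sub_eq_exp_tsum_log (hf : Summable f) (hf1 : ∀ i, f i < 1) :
    ∏' i, (1 - f i) = exp (∑' i, log (1 - f i)) := by
  have hlog : Summable fun i ↦ log (1 - f i) := by
    simpa only [sub_eq_add_neg] using summable_log_one_add_of_summable hf.neg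
  exact (rexp_tsum_eq_tprod (fun i ↦ sub_pos.2 (hf1 i)) hlog).symm

theorem tprod_one_sub_pos (hf : Summable f) (hf1 : ∀ i, f i < 1) : 0 < ∏' i, (1 - f i) := by
  rw [tprod_one_sub_eq_exp_tsum_log hf hf1]
  exact exp_pos _

theorem tprod_one_sub_le_prod (hf : Summable f) (hf0 : ∀ i, 0 ≤ f i) (hf1 : ∀ i, f i < 1)
    (s : Finset ι) : ∏' i, (1 - f i) ≤ ∏ i ∈ s, (1 - f i) := by
  have hpos : ∀ i, 0 < 1 - f i := fun i ↦ sub_pos.2 (hf1 i)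
  have hlog : Summable fun i ↦ -log (1 - f i) := by
    simpa only [sub_eq_add_neg] using (summable_log_one_add_of_summable hf.neg).neg
  rw [tprod_one_sub_eq_exp_tsum_log hf hf1, ← exp_log (prod_pos fun i _ ↦ hpos i),
    exp_le_exp, log_prod fun i _ ↦ (hpos i).ne', ← neg_le_neg_iff, ← tsum_neg,
    ← sum_neg_distrib]
  exact hlog.sum_le_tsum s fun i _ ↦
    neg_nonneg.2 (log_nonpos (hpos i).le (sub_le_self _ (hf0 i)))

end Real

theorem summable_inv_pow_succ {x : ℝ} (hx : 1 < x) : Summable fun k : ℕ ↦ (x ^ (k + 1))⁻¹ := by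
  simp only [pow_succ, mul_inv, ← inv_pow]
  exact (summable_geometric_of_lt_one (by positivity) (inv_lt_one_of_one_lt₀ hx)).mul_right x⁻¹

theorem inv_pow_lt_one {x : ℝ} (hx : 1 < x) {k : ℕ} (hk : k ≠ 0) : (x ^ k)⁻¹ < 1 :=
  inv_lt_one_of_one_lt₀ (one_lt_pow₀ hx hk)

theorem tprod_one_sub_inv_pow_succ_le_prod_divisors {x : ℝ} (hx : 1 < x) (m : ℕ) :
    ∏' k : ℕ, (1 - (x ^ (k + 1))⁻¹) ≤ ∏ d ∈ m.divisors, (1 - (x ^ d)⁻¹) := by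
  have hinj : Set.InjOn (· - 1) (m.divisors : Set ℕ) := fun a ha b hb hab ↦ by
    have := Nat.pos_of_mem_divisors ha
    have := Nat.pos_of_mem_divisors hb
    simp only at hab
    omega
  calc ∏' k : ℕ, (1 - (x ^ (k + 1))⁻¹)
      ≤ ∏ k ∈ m.divisors.image (· - 1), (1 - (x ^ (k + 1))⁻¹) :=
        Real.tprod_one_sub_le_prod (summable_inv_pow_succ hx) (fun _ ↦ by positivity)
          (fun _ ↦ inv_pow_lt_one hx (Nat.succ_ne_zero _)) _
    _ = ∏ d ∈ m.divisors, (1 - (x ^ d)⁻¹) := by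
        rw [prod_image hinj]
        refine prod_congr rfl fun d hd ↦ ?_
        rw [Nat.sub_add_cancel (Nat.pos_of_mem_divisors hd)]

section Field

variable {K : Type*} [Field K] {x : K}

theorem prod_divisors_cyclotomic_eval_div_pow_totient (hx : x ≠ 0) {k : ℕ} (hk : 0 < k) :
    ∏ d ∈ k.divisors, (cyclotomic d K).eval x / x ^ d.totient = 1 - (x ^ k)⁻¹ := by
  rw [prod_div_distrib, prod_pow_eq_pow_sum, Nat.sum_totient, ← eval_prod,
    prod_cyclotomic_eq_X_pow_sub_one hk]
  simp only [eval_sub, eval_pow, eval_X, eval_one]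
  field_simp

theorem cyclotomic_eval_div_pow_totient_eq_prod_pow_moebius (hx : x ≠ 0)
    (hx1 : ∀ k, 0 < k → x ^ k ≠ 1) {m : ℕ} (hm : 0 < m) :
    (cyclotomic m K).eval x / x ^ m.totient =
      ∏ p ∈ m.divisorsAntidiagonal, (1 - (x ^ p.2)⁻¹) ^ μ p.1 := by
  have hg : ∀ k, 0 < k → 1 - (x ^ k)⁻¹ ≠ 0 := fun k hk ↦ by
    rw [sub_ne_zero, ne_comm, inv_ne_one]
    exact hx1 k hk
  have hf : ∀ d, 0 < d → (cyclotomic d K).eval x / x ^ d.totient ≠ 0 := fun d hd ↦ by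
    have := prod_divisors_cyclotomic_eval_div_pow_totient hx hd ▸ hg d hd
    exact prod_ne_zero_iff.1 this d (Nat.mem_divisors_self d hd.ne')
  exact ((ArithmeticFunction.prod_eq_iff_prod_pow_moebius_eq_of_nonzero hf hg).1
    (fun k hk ↦ prod_divisors_cyclotomic_eval_div_pow_totient hx hk) m hm).symm

end Field

theorem zpow_mem_Icc_inv_of_abs_le_one {y : ℝ} (hy0 : 0 < y) (hy1 : y ≤ 1) {e : ℤ}
    (he : |e| ≤ 1) : y ^ e ∈ Set.Icc y y⁻¹ := by
  obtain ⟨he₁, he₂⟩ := abs_le.1 he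
  constructor
  · simpa using zpow_le_zpow_right_of_le_one₀ hy0 hy1 he₂
  · simpa using zpow_le_zpow_right_of_le_one₀ hy0 hy1 he₁

theorem prod_zpow_mem_Icc_prod_inv_of_abs_le_one {ι : Type*} {s : Finset ι} {y : ι → ℝ}
    {e : ι → ℤ} (hy0 : ∀ i ∈ s, 0 < y i) (hy1 : ∀ i ∈ s, y i ≤ 1) (he : ∀ i ∈ s, |e i| ≤ 1) :
    ∏ i ∈ s, y i ^ e i ∈ Set.Icc (∏ i ∈ s, y i) (∏ i ∈ s, y i)⁻¹ := by
  have h i (hi : i ∈ s) := zpow_mem_Icc_inv_of_abs_le_one (hy0 i hi) (hy1 i hi) (he i hi)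
  rw [← prod_inv_distrib]
  exact ⟨prod_le_prod (fun i hi ↦ (hy0 i hi).le) fun i hi ↦ (h i hi).1,
    prod_le_prod (fun i hi ↦ (zpow_pos (hy0 i hi) _).le) fun i hi ↦ (h i hi).2⟩

theorem cyclotomic_eval_bounds_of_one_lt {x : ℝ} (hx : 1 < x) {m : ℕ} (hm : 0 < m) :
    (∏' k : ℕ, (1 - (x ^ (k + 1))⁻¹)) * x ^ m.totient ≤ (cyclotomic m ℝ).eval x ∧
      (cyclotomic m ℝ).eval x ≤ x ^ m.totient / ∏' k : ℕ, (1 - (x ^ (k + 1))⁻¹) := by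
  set P := ∏' k : ℕ, (1 - (x ^ (k + 1))⁻¹)
  have hP : 0 < P := Real.tprod_one_sub_pos (summable_inv_pow_succ hx)
    fun _ ↦ inv_pow_lt_one hx (Nat.succ_ne_zero _)
  have hPR : P ≤ ∏ p ∈ m.divisorsAntidiagonal, (1 - (x ^ p.2)⁻¹) := by
    rw [Nat.prod_divisorsAntidiagonal' fun _ b ↦ 1 - (x ^ b)⁻¹]
    exact tprod_one_sub_inv_pow_succ_le_prod_divisors hx m
  have hΦ := cyclotomic_eval_div_pow_totient_eq_prod_pow_moebius (by positivity)
    (fun k hk ↦ (one_lt_pow₀ hx hk.ne').ne') hm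
  rw [div_eq_iff (by positivity)] at hΦ
  obtain ⟨hlow, hupp⟩ := prod_zpow_mem_Icc_prod_inv_of_abs_le_one (e := fun p ↦ μ p.1)
    (fun p hp ↦ sub_pos.2 (inv_pow_lt_one hx
      (Nat.pos_of_mem_divisors (Nat.snd_mem_divisors_of_mem_antidiagonal hp)).ne'))
    (fun _ _ ↦ sub_le_self _ (by positivity)) fun _ _ ↦ ArithmeticFunction.abs_moebius_le_one
  rw [hΦ, div_eq_mul_inv, mul_comm _ P⁻¹]
  exact ⟨by gcongr; exact hPR.trans hlow, by gcongr; exact hupp.trans (inv_anti₀ hP hPR)⟩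

/-- For `n ≥ 2` and `m ≥ 1`,
`∏_{k=1}^∞ (1 - n^{-k}) · n^{φ(m)} ≤ Φ_m(n) ≤ n^{φ(m)} / ∏_{k=1}^∞ (1 - n^{-k})`. -/
theorem cyclotomic_eval_bounds (n : ℕ) (hn : 2 ≤ n) (m : ℕ) (hm : 1 ≤ m) :
    (∏' k : ℕ, (1 - ((n : ℝ) ^ (k + 1))⁻¹)) * (n : ℝ) ^ (Nat.totient m) ≤
        (((cyclotomic m ℤ).eval (n : ℤ) : ℤ) : ℝ) ∧
      (((cyclotomic m ℤ).eval (n : ℤ) : ℤ) : ℝ) ≤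
        (n : ℝ) ^ (Nat.totient m) / ∏' k : ℕ, (1 - ((n : ℝ) ^ (k + 1))⁻¹) := by
  have hΦ : (((cyclotomic m ℤ).eval (n : ℤ) : ℤ) : ℝ) = (cyclotomic m ℝ).eval (n : ℝ) := by
    simpa using (cyclotomic.eval_apply (n : ℤ) m (Int.castRingHom ℝ)).symm
  rw [hΦ]
  exact cyclotomic_eval_bounds_of_one_lt (by exact_mod_cast hn) hm
end

section
/- Let q be an odd prime, p a prime with p ≠ q and p^k ≢ 1 (mod q), and α a nonnegative integer such that ϖ_k := ord_q(p^k) divides α + 1. Then v_q(σ_k(p^α)) = v_q(α + 1) + v_q(p^{k·ϖ_k} − 1). -/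
/-!
With `a = p ^ k` we have `(a - 1) σ_k(p^α) = a^(α+1) - 1`, and `q ∤ a - 1`, so
`v_q(σ_k(p^α)) = v_q(a^(α+1) - 1)`. Writing `α + 1 = ϖ_k m`, lifting the exponent for the odd
prime `q ∣ a^ϖ_k - 1` gives `v_q(a^(α+1) - 1) = v_q(a^ϖ_k - 1) + v_q(m)`, and
`v_q(m) = v_q(α + 1)` because `ϖ_k ∣ q - 1` is prime to `q`.
-/

open ArithmeticFunction

theorem Nat.geom_sum_mul_sub_one (a n : ℕ) :
    (∑ i ∈ Finset.range n, a ^ i) * (a - 1) = a ^ n - 1 := by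
  rcases a with _ | b
  · cases n <;> simp
  · rw [Nat.add_sub_cancel, ← geom_sum_mul_add b n, Nat.add_sub_cancel]

theorem sigma_apply_prime_pow_eq_geom_sum {k p α : ℕ} (hp : p.Prime) :
    sigma k (p ^ α) = ∑ j ∈ Finset.range (α + 1), (p ^ k) ^ j := by
  simp_rw [sigma_apply_prime_pow hp, ← pow_mul, mul_comm]

theorem ZMod.not_dvd_orderOf {q : ℕ} [Fact q.Prime] {x : ZMod q} (hx : x ≠ 0) :
    ¬ q ∣ orderOf x := by
  intro h
  have hq : 1 < q := (Fact.out : q.Prime).one_lt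
  have := Nat.le_of_dvd (by omega) (h.trans (ZMod.orderOf_dvd_card_sub_one hx))
  omega

theorem padicValNat_geom_sum_of_not_modEq_one {q a : ℕ} [Fact q.Prime] (ha : 0 < a)
    (hcong : ¬ a ≡ 1 [MOD q]) (n : ℕ) :
    padicValNat q (∑ i ∈ Finset.range n, a ^ i) = padicValNat q (a ^ n - 1) := by
  have hndvd : ¬ q ∣ a - 1 := fun h => hcong ((Nat.modEq_iff_dvd' ha).mpr h).symm
  have ha1 : a - 1 ≠ 0 := fun h => hndvd (h ▸ dvd_zero q)
  rcases n.eq_zero_or_pos with rfl | hn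
  · simp
  have hsum : ∑ i ∈ Finset.range n, a ^ i ≠ 0 :=
    (Finset.sum_pos (fun i _ => pow_pos ha i) (by simp; omega)).ne'
  rw [← Nat.geom_sum_mul_sub_one, padicValNat.mul hsum ha1,
    padicValNat.eq_zero_of_not_dvd hndvd, add_zero]

theorem padicValNat_pow_sub_one_of_orderOf_dvd {q a n : ℕ} [Fact q.Prime] (hodd : Odd q)
    (ha : 1 < a) (hn : n ≠ 0) (hdvd : orderOf (a : ZMod q) ∣ n) :
    padicValNat q (a ^ n - 1) =
      padicValNat q n + padicValNat q (a ^ orderOf (a : ZMod q) - 1) := by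
  set d := orderOf (a : ZMod q)
  obtain ⟨m, rfl⟩ := hdvd
  have hd : d ≠ 0 := left_ne_zero_of_mul hn
  have hm : m ≠ 0 := right_ne_zero_of_mul hn
  have had : ((a ^ d : ℕ) : ZMod q) = 1 := by push_cast; exact pow_orderOf_eq_one _
  have hq_dvd : q ∣ a ^ d - 1 := by
    rw [← ZMod.natCast_eq_zero_iff, Nat.cast_sub (Nat.one_le_pow _ _ (by omega)), had]
    simp
  have hq_not_dvd : ¬ q ∣ a ^ d := by
    rw [← ZMod.natCast_eq_zero_iff, had]
    exact one_ne_zero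
  have ha0 : (a : ZMod q) ≠ 0 := by
    rw [Ne, ZMod.natCast_eq_zero_iff]
    exact fun h => hq_not_dvd (dvd_pow h hd)
  have hlte := padicValNat.pow_sub_pow hodd (Nat.one_lt_pow hd ha) hq_dvd hq_not_dvd hm
  rw [one_pow] at hlte
  rw [pow_mul, hlte, padicValNat.mul hd hm,
    padicValNat.eq_zero_of_not_dvd (ZMod.not_dvd_orderOf ha0), zero_add, add_comm]

theorem valuation_sigma_of_order_dvd_general (q p : ℕ) (hq : q.Prime) (hodd : Odd q)
    (hp : p.Prime) (k : ℕ) (hcong : ¬ p ^ k ≡ 1 [MOD q])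
    (α : ℕ) (hdvd : orderOf ((p : ZMod q) ^ k) ∣ α + 1) :
    padicValNat q (sigma k (p ^ α)) =
      padicValNat q (α + 1) +
        padicValNat q (p ^ (k * orderOf ((p : ZMod q) ^ k)) - 1) := by
  have : Fact q.Prime := ⟨hq⟩
  have hk : k ≠ 0 := by rintro rfl; exact hcong rfl
  have hpk : 1 < p ^ k := Nat.one_lt_pow hk hp.one_lt
  rw [sigma_apply_prime_pow_eq_geom_sum hp,
    padicValNat_geom_sum_of_not_modEq_one (by omega) hcong, pow_mul]
  exact_mod_cast padicValNat_pow_sub_one_of_orderOf_dvd hodd hpk α.succ_ne_zero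
    (by exact_mod_cast hdvd)

/-- If `q` is an odd prime, `p ≠ q` a prime with `p^k ≢ 1 (mod q)`, and
`ϖ_k := ord_q(p^k)` divides `α + 1`, then
`v_q(σ_k(p^α)) = v_q(α + 1) + v_q(p^{k·ϖ_k} − 1)`. -/
theorem valuation_sigma_of_order_dvd (q p : ℕ) (hq : q.Prime) (hodd : Odd q)
    (hp : p.Prime) (hpq : p ≠ q) (k : ℕ) (hcong : ¬ p ^ k ≡ 1 [MOD q])
    (α : ℕ) (hdvd : orderOf ((p : ZMod q) ^ k) ∣ α + 1) :
    padicValNat q (sigma k (p ^ α)) =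
      padicValNat q (α + 1) +
        padicValNat q (p ^ (k * orderOf ((p : ZMod q) ^ k)) - 1) :=
  valuation_sigma_of_order_dvd_general q p hq hodd hp k hcong α hdvd
end

section
/- Let n ≥ 2, k ≥ 1 be integers and q ≥ 3 a prime. Then v_q(σ_k(n)) = ∑ v_q(α+1) over prime powers p^α exactly dividing n with p^k ≡ 1 (mod q), plus ∑ ( v_q(α+1) + v_q(k) + v_q(Φ_{ϖ_1}(p)) ) over prime powers p^α exactly dividing n with p ≠ q, p^k ≢ 1 (mod q), and ϖ_k ∣ α + 1, where ϖ_1 = ord_q(p) and ϖ_k = ord_q(p^k). -/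
/-!
Write `x = p ^ k`, so that `σ_k(p^α) = 1 + x + ⋯ + x^α` and `(x - 1) σ_k(p^α) = x^(α+1) - 1`.
If `x ≡ 1 (mod q)`, lifting the exponent gives `v_q(σ_k(p^α)) = v_q(α + 1)`. Otherwise
`v_q(σ_k(p^α)) = v_q(x^(α+1) - 1)`, which vanishes unless `ord_q(x) ∣ α + 1`. In that case
`d = ord_q(p)` divides `k(α + 1)`; of the factors `Φ_e(p)`, `e ∣ d`, of `p^d - 1` only `Φ_d(p)`
is divisible by `q` (by minimality of `d`), and lifting the exponent from `p^d - 1` gives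
`v_q(Φ_d(p)) + v_q(k(α + 1))`, since `q ∤ d ∣ q - 1`. Multiplicativity of `σ_k` sums these
contributions over `p^α ∥ n`.
-/

open Polynomial ArithmeticFunction Finset

theorem natCast_eq_one_iff_dvd_sub_one {q x : ℕ} (hx : 1 ≤ x) :
    (x : ZMod q) = 1 ↔ q ∣ x - 1 := by
  rw [← ZMod.natCast_eq_zero_iff, Nat.cast_sub hx, Nat.cast_one, sub_eq_zero]

theorem dvd_pow_sub_one_iff_orderOf_dvd {q x : ℕ} (hx : 1 ≤ x) (m : ℕ) :
    q ∣ x ^ m - 1 ↔ orderOf (x : ZMod q) ∣ m := by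
  rw [orderOf_dvd_iff_pow_eq_one, ← natCast_eq_one_iff_dvd_sub_one (Nat.one_le_pow _ _ hx),
    Nat.cast_pow]

theorem padicValNat_pow_sub_one_eq_zero {q x m : ℕ} (hx : 1 ≤ x)
    (h : ¬ orderOf (x : ZMod q) ∣ m) : padicValNat q (x ^ m - 1) = 0 :=
  padicValNat.eq_zero_of_not_dvd (mt (dvd_pow_sub_one_iff_orderOf_dvd hx m).mp h)

theorem orderOf_dvd_of_dvd_eval_cyclotomic {q p e : ℕ}
    (h : (q : ℤ) ∣ (cyclotomic e ℤ).eval (p : ℤ)) : orderOf (p : ZMod q) ∣ e := by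
  have hdvd : (q : ℤ) ∣ (p : ℤ) ^ e - 1 := by
    simpa using h.trans (eval_dvd (cyclotomic.dvd_X_pow_sub_one e ℤ) (x := (p : ℤ)))
  rw [orderOf_dvd_iff_pow_eq_one, ← sub_eq_zero]
  exact_mod_cast (ZMod.intCast_zmod_eq_zero_iff_dvd _ q).mpr hdvd

theorem pow_sub_one_eq_eval_cyclotomic_mul_prod_properDivisors {d : ℕ} (hd : d ≠ 0) (x : ℤ) :
    x ^ d - 1 =
      (cyclotomic d ℤ).eval x * ∏ e ∈ d.properDivisors, (cyclotomic e ℤ).eval x := by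
  rw [← prod_cons (f := fun e => (cyclotomic e ℤ).eval x) Nat.self_notMem_properDivisors,
    Nat.cons_self_properDivisors hd, ← eval_prod,
    prod_cyclotomic_eq_X_pow_sub_one (Nat.pos_of_ne_zero hd)]
  simp

section

variable {q : ℕ} [hq : Fact q.Prime]

theorem padicValNat_finset_prod {ι : Type*} {s : Finset ι} {f : ι → ℕ}
    (hf : ∀ i ∈ s, f i ≠ 0) :
    padicValNat q (∏ i ∈ s, f i) = ∑ i ∈ s, padicValNat q (f i) := by
  simp_rw [← Nat.factorization_def _ hq.out, Nat.factorization_prod hf, Finsupp.finsetSum_apply]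

theorem padicValNat_pow_sub_one_eq_add {x : ℕ} (hx : 1 < x) {m : ℕ} (hm : m ≠ 0) :
    padicValNat q (x ^ m - 1) =
      padicValNat q (∑ i ∈ range m, x ^ i) + padicValNat q (x - 1) := by
  rw [← geom_sum_mul_of_one_le hx.le, padicValNat.mul (by positivity) (by omega)]

theorem padicValNat_geom_sum_of_natCast_eq_one (hq_odd : Odd q) {x : ℕ}
    (hx : (x : ZMod q) = 1) (m : ℕ) :
    padicValNat q (∑ i ∈ range m, x ^ i) = padicValNat q m := by
  rcases Nat.lt_trichotomy x 1 with hx0 | rfl | hx1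
  · obtain rfl : x = 0 := by omega
    simp at hx
  · simp
  rcases eq_or_ne m 0 with rfl | hm
  · simp
  have hdvd := (natCast_eq_one_iff_dvd_sub_one hx1.le).mp hx
  have hqx : ¬ q ∣ x := fun h => one_ne_zero (hx ▸ (ZMod.natCast_eq_zero_iff x q).mpr h)
  have hlte := padicValNat.pow_sub_pow hq_odd hx1 (by simpa using hdvd) hqx hm
  rw [one_pow, padicValNat_pow_sub_one_eq_add hx1 hm] at hlte
  omega

theorem padicValNat_geom_sum_of_natCast_ne_one {x : ℕ} (hx1 : 1 < x) (hx : (x : ZMod q) ≠ 1)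
    (m : ℕ) : padicValNat q (∑ i ∈ range m, x ^ i) = padicValNat q (x ^ m - 1) := by
  rcases eq_or_ne m 0 with rfl | hm
  · simp
  rw [padicValNat_pow_sub_one_eq_add hx1 hm, padicValNat.eq_zero_of_not_dvd
    (mt (natCast_eq_one_iff_dvd_sub_one hx1.le).mpr hx), add_zero]

theorem orderOf_natCast_dvd_sub_one {p : ℕ} (hqp : ¬ q ∣ p) : orderOf (p : ZMod q) ∣ q - 1 :=
  ZMod.orderOf_dvd_card_sub_one (mt (ZMod.natCast_eq_zero_iff p q).mp hqp)

theorem orderOf_natCast_pos {p : ℕ} (hqp : ¬ q ∣ p) : 0 < orderOf (p : ZMod q) :=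
  Nat.pos_of_dvd_of_pos (orderOf_natCast_dvd_sub_one hqp) (Nat.sub_pos_of_lt hq.out.one_lt)

theorem padicValInt_eval_cyclotomic_orderOf {p : ℕ} (hp : 1 < p) (hqp : ¬ q ∣ p) :
    padicValInt q ((cyclotomic (orderOf (p : ZMod q)) ℤ).eval (p : ℤ)) =
      padicValNat q (p ^ orderOf (p : ZMod q) - 1) := by
  set d := orderOf (p : ZMod q)
  have hd : 0 < d := orderOf_natCast_pos hqp
  have hsplit := pow_sub_one_eq_eval_cyclotomic_mul_prod_properDivisors hd.ne' (p : ℤ)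
  have hne : (p : ℤ) ^ d - 1 ≠ 0 := by
    have : (1 : ℤ) < (p : ℤ) ^ d := by exact_mod_cast Nat.one_lt_pow hd.ne' hp
    omega
  rw [hsplit] at hne
  have hrest : ¬ (q : ℤ) ∣ ∏ e ∈ d.properDivisors, (cyclotomic e ℤ).eval (p : ℤ) := by
    intro h
    obtain ⟨e, he, hdvd⟩ := (Nat.prime_iff_prime_int.mp hq.out).exists_mem_finset_dvd h
    obtain ⟨hed, hlt⟩ := Nat.mem_properDivisors.mp he
    exact hlt.not_ge (Nat.le_of_dvd (Nat.pos_of_dvd_of_pos hed hd)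
      (orderOf_dvd_of_dvd_eval_cyclotomic hdvd))
  rw [← padicValInt.of_nat, Nat.cast_sub (Nat.one_le_pow _ _ (by omega)), Nat.cast_pow,
    Nat.cast_one, hsplit, padicValInt.mul (left_ne_zero_of_mul hne) (right_ne_zero_of_mul hne),
    padicValInt.eq_zero_of_not_dvd hrest, add_zero]

theorem padicValNat_pow_sub_one_of_orderOf_dvd_s12 (hq_odd : Odd q) {p n : ℕ} (hp : 1 < p)
    (hqp : ¬ q ∣ p) (hd : orderOf (p : ZMod q) ∣ n) (hn : n ≠ 0) :
    padicValNat q (p ^ n - 1) =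
      padicValInt q ((cyclotomic (orderOf (p : ZMod q)) ℤ).eval (p : ℤ)) + padicValNat q n := by
  obtain ⟨t, rfl⟩ := hd
  set d := orderOf (p : ZMod q)
  have hd0 : 0 < d := orderOf_natCast_pos hqp
  have ht : t ≠ 0 := right_ne_zero_of_mul hn
  have hqd : ¬ q ∣ d := fun h => by
    have := Nat.le_of_dvd (Nat.sub_pos_of_lt hq.out.one_lt) (orderOf_natCast_dvd_sub_one hqp)
    have := Nat.le_of_dvd hd0 h
    omega
  have hlte := padicValNat.pow_sub_pow hq_odd (x := p ^ d) (y := 1) (Nat.one_lt_pow hd0.ne' hp)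
    ((dvd_pow_sub_one_iff_orderOf_dvd hp.le d).mpr dvd_rfl)
    (fun h => hqp (hq.out.dvd_of_dvd_pow h)) ht
  rw [← pow_mul, Nat.one_pow] at hlte
  rw [hlte, padicValInt_eval_cyclotomic_orderOf hp hqp, padicValNat.mul hd0.ne' ht,
    padicValNat.eq_zero_of_not_dvd hqd, zero_add]

theorem padicValNat_sigma_prime_pow (hq_odd : Odd q) {k p : ℕ} (hp : p.Prime) (α : ℕ) :
    padicValNat q (sigma k (p ^ α)) =
      (if (p : ZMod q) ^ k = 1 then padicValNat q (α + 1) else 0) +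
      (if p ≠ q ∧ (p : ZMod q) ^ k ≠ 1 ∧ orderOf ((p : ZMod q) ^ k) ∣ α + 1
        then padicValNat q (α + 1) + padicValNat q k +
          padicValInt q ((cyclotomic (orderOf (p : ZMod q)) ℤ).eval (p : ℤ))
        else 0) := by
  have hσ : sigma k (p ^ α) = ∑ j ∈ range (α + 1), (p ^ k) ^ j := by
    simp_rw [sigma_apply_prime_pow hp, ← pow_mul, mul_comm]
  have hcast : ((p ^ k : ℕ) : ZMod q) = (p : ZMod q) ^ k := Nat.cast_pow p k
  rw [hσ]
  by_cases h1 : (p : ZMod q) ^ k = 1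
  · rw [if_pos h1, if_neg (fun h => h.2.1 h1), add_zero]
    exact padicValNat_geom_sum_of_natCast_eq_one hq_odd (hcast ▸ h1) _
  have hk : k ≠ 0 := by rintro rfl; exact h1 (pow_zero _)
  rw [if_neg h1, zero_add,
    padicValNat_geom_sum_of_natCast_ne_one (Nat.one_lt_pow hk hp.one_lt) (hcast ▸ h1)]
  by_cases hord : orderOf ((p : ZMod q) ^ k) ∣ α + 1
  · have hpq : p ≠ q := by
      rintro rfl
      simp [zero_pow hk, orderOf_zero] at hord
    have hqp : ¬ q ∣ p := fun h => hpq ((Nat.prime_dvd_prime_iff_eq hq.out hp).mp h).symm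
    have hdvd : orderOf (p : ZMod q) ∣ k * (α + 1) := by
      rw [orderOf_dvd_iff_pow_eq_one, pow_mul, ← orderOf_dvd_iff_pow_eq_one]
      exact hord
    rw [if_pos ⟨hpq, h1, hord⟩, ← pow_mul,
      padicValNat_pow_sub_one_of_orderOf_dvd_s12 hq_odd hp.one_lt hqp hdvd (by positivity),
      padicValNat.mul hk (by omega)]
    ring
  · rw [if_neg (fun h => hord h.2.2)]
    exact padicValNat_pow_sub_one_eq_zero (Nat.one_le_pow _ _ hp.pos) (hcast ▸ hord)

end

theorem valuation_sigma_k_general (n k q : ℕ) (hq : q.Prime) (hq3 : 3 ≤ q) :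
    padicValNat q (sigma k n) =
      (∑ p ∈ n.primeFactors.filter (fun p : ℕ => ((p : ZMod q)) ^ k = 1),
          padicValNat q (n.factorization p + 1)) +
      ∑ p ∈ n.primeFactors.filter
          (fun p : ℕ => p ≠ q ∧ ((p : ZMod q)) ^ k ≠ 1 ∧
            orderOf (((p : ZMod q)) ^ k) ∣ n.factorization p + 1),
        (padicValNat q (n.factorization p + 1) + padicValNat q k +
          padicValInt q ((cyclotomic (orderOf ((p : ZMod q))) ℤ).eval (p : ℤ))) := by
  have := Fact.mk hq
  rcases eq_or_ne n 0 with rfl | hn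
  · simp
  rw [isMultiplicative_sigma.multiplicative_factorization _ hn, Finsupp.prod,
    Nat.support_factorization, padicValNat_finset_prod fun p hp =>
      (sigma_pos _ _ (pow_ne_zero _ (Nat.prime_of_mem_primeFactors hp).ne_zero)).ne',
    sum_filter, sum_filter, ← sum_add_distrib]
  exact sum_congr rfl fun p hp =>
    padicValNat_sigma_prime_pow (hq.odd_of_ne_two (by omega)) (Nat.prime_of_mem_primeFactors hp) _

/-- Main theorem: exact formula for `v_q(σ_k(n))` for an odd prime `q`. -/
theorem valuation_sigma_k (n k q : ℕ) (hn : 2 ≤ n) (hk : 1 ≤ k) (hq : q.Prime)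
    (hq3 : 3 ≤ q) :
    padicValNat q (sigma k n) =
      (∑ p ∈ n.primeFactors.filter (fun p : ℕ => ((p : ZMod q)) ^ k = 1),
          padicValNat q (n.factorization p + 1)) +
      ∑ p ∈ n.primeFactors.filter
          (fun p : ℕ => p ≠ q ∧ ((p : ZMod q)) ^ k ≠ 1 ∧
            orderOf (((p : ZMod q)) ^ k) ∣ n.factorization p + 1),
        (padicValNat q (n.factorization p + 1) + padicValNat q k +
          padicValInt q ((cyclotomic (orderOf ((p : ZMod q))) ℤ).eval (p : ℤ))) :=
  valuation_sigma_k_general n k q hq hq3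
end

section
/- Let n ≥ 2 be an integer. Then v_7(σ_9(n)) = ∑_{p^α ∥ n, p ≡ 1,2,4 (mod 7)} v_7(α+1) + ∑_{p^α ∥ n, p ≡ 3,5 (mod 7), 2 ∣ α+1} ( v_7(α+1) + v_7(p² − p + 1) ) + ∑_{p^α ∥ n, p ≡ 6 (mod 7), 2 ∣ α+1} ( v_7(α+1) + v_7(p + 1) ). -/
open ArithmeticFunction
open Finset

open Finset

private instance fact7 : Fact (Nat.Prime 7) := ⟨by norm_num⟩

private lemma odd7 : Odd 7 := ⟨3, rfl⟩

-- geometric series identity in ℕ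
private lemma geom_nat (q m : ℕ) (hq : 1 ≤ q) :
    (∑ j ∈ range m, q ^ j) * (q - 1) = q ^ m - 1 := by
  have h1 : 1 ≤ q ^ m := Nat.one_le_pow _ _ hq
  zify [hq, h1]
  exact geom_sum_mul (q : ℤ) m

private lemma S_ne_zero (q m : ℕ) (hm : m ≠ 0) : (∑ j ∈ range m, q ^ j) ≠ 0 := by
  have : 0 < ∑ j ∈ range m, q ^ j := by
    refine Finset.sum_pos' (fun j _ => Nat.zero_le _) ⟨0, ?_, by simp⟩
    simp [Nat.pos_of_ne_zero hm]
  omega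

private lemma val_geom_one {q m : ℕ} (hq : 2 ≤ q) (h7 : q % 7 = 1) (hm : m ≠ 0) :
    padicValNat 7 (∑ j ∈ range m, q ^ j) = padicValNat 7 m := by
  have hgeom := geom_nat q m (by omega)
  have hpow := padicValNat.pow_sub_pow (p := 7) odd7 (x := q) (y := 1)
      (by omega) (by omega) (by omega) hm
  simp only [one_pow] at hpow
  have hS := S_ne_zero q m hm
  have hq1 : q - 1 ≠ 0 := by omega
  have := padicValNat.mul (p := 7) hS hq1
  rw [hgeom, hpow] at this
  omega

private lemma val_geom_negone_even {q m : ℕ} (hq : 2 ≤ q) (h7 : q % 7 = 6) (hm : m ≠ 0)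
    (he : 2 ∣ m) : padicValNat 7 (∑ j ∈ range m, q ^ j) =
      padicValNat 7 (q + 1) + padicValNat 7 m := by
  obtain ⟨k, rfl⟩ := he
  have hk : k ≠ 0 := by omega
  have hq2 : q ^ 2 % 7 = 1 := by
    rw [Nat.pow_mod, h7]
  -- v(q^(2k) - 1) = v(q^2 - 1) + v(k)
  have hpow := padicValNat.pow_sub_pow (p := 7) odd7 (x := q ^ 2) (y := 1)
      (by nlinarith) (by omega) (by omega) hk
  simp only [one_pow, ← pow_mul] at hpow
  -- q^2 - 1 = (q+1) * (q-1)
  have hfac : q ^ 2 - 1 = (q + 1) * (q - 1) := by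
    have := Nat.sq_sub_sq q 1
    simpa using this
  have hv2 : padicValNat 7 (q ^ 2 - 1) = padicValNat 7 (q + 1) := by
    rw [hfac, padicValNat.mul (p := 7) (by omega) (by omega),
      padicValNat.eq_zero_of_not_dvd (by omega : ¬ (7:ℕ) ∣ q - 1), add_zero]
  have hvm : padicValNat 7 (2 * k) = padicValNat 7 k := by
    rw [padicValNat.mul (p := 7) (by omega) hk,
      padicValNat.eq_zero_of_not_dvd (by omega : ¬ (7:ℕ) ∣ 2), zero_add]
  have hgeom := geom_nat q (2 * k) (by omega)
  have hS := S_ne_zero q (2 * k) hm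
  have hmul := padicValNat.mul (p := 7) hS (by omega : q - 1 ≠ 0)
  rw [hgeom, padicValNat.eq_zero_of_not_dvd (by omega : ¬ (7:ℕ) ∣ q - 1), add_zero] at hmul
  rw [← hmul, hpow, hv2, hvm]

private lemma val_geom_negone_odd {q m : ℕ} (h7 : q % 7 = 6) (ho : ¬ 2 ∣ m) :
    padicValNat 7 (∑ j ∈ range m, q ^ j) = 0 := by
  apply padicValNat.eq_zero_of_not_dvd
  rw [← ZMod.natCast_eq_zero_iff]
  push_cast
  have hq : (q : ZMod 7) = -1 := by
    have : ((q % 7 : ℕ) : ZMod 7) = (q : ZMod 7) := ZMod.natCast_mod q 7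
    rw [h7] at this
    rw [← this]; decide
  rw [hq, neg_one_geom_sum]
  have : ¬ Even m := by simpa [Nat.even_iff, Nat.two_dvd_ne_zero] using ho
  simp [this]

private lemma val_geom_zero {q m : ℕ} (h7 : q % 7 = 0) :
    padicValNat 7 (∑ j ∈ range m, q ^ j) = 0 := by
  rcases Nat.eq_zero_or_pos m with h | h
  · simp [h]
  apply padicValNat.eq_zero_of_not_dvd
  rw [← ZMod.natCast_eq_zero_iff]
  push_cast
  have hq : (q : ZMod 7) = 0 := by
    rw [← ZMod.natCast_mod, h7]; rfl
  rw [hq, zero_geom_sum]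
  simp [Nat.pos_iff_ne_zero.mp h]

private lemma val_q_add_one {p : ℕ} (hp : 2 ≤ p) (h3 : p ^ 3 % 7 = 6) :
    padicValNat 7 (p ^ 9 + 1) =
      padicValNat 7 (p + 1) + padicValNat 7 (p ^ 2 - p + 1) := by
  have h1 := padicValNat.pow_add_pow (p := 7) odd7 (x := p ^ 3) (y := 1)
      (by omega) (by omega) (n := 3) ⟨1, rfl⟩
  simp only [one_pow, ← pow_mul] at h1
  norm_num at h1
  have hpq : p ≤ p ^ 2 := by nlinarith
  have hfac : p ^ 3 + 1 = (p + 1) * (p ^ 2 - p + 1) := by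
    zify [hpq]; ring
  rw [h1, hfac, padicValNat.mul (by omega) (by omega),
    padicValNat.eq_zero_of_not_dvd (by norm_num : ¬ (7:ℕ) ∣ 3), add_zero]

private lemma key (p α : ℕ) (hp : p.Prime) (hα : α ≠ 0) :
    padicValNat 7 (sigma 9 (p ^ α)) =
      (if p % 7 = 1 ∨ p % 7 = 2 ∨ p % 7 = 4 then padicValNat 7 (α + 1) else 0) +
      (if (p % 7 = 3 ∨ p % 7 = 5) ∧ 2 ∣ α + 1 then
          padicValNat 7 (α + 1) + padicValNat 7 (p ^ 2 - p + 1) else 0) +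
      (if p % 7 = 6 ∧ 2 ∣ α + 1 then
          padicValNat 7 (α + 1) + padicValNat 7 (p + 1) else 0) := by
  have hσ : sigma 9 (p ^ α) = ∑ j ∈ range (α + 1), (p ^ 9) ^ j := by
    rw [sigma_apply_prime_pow hp]
    simp [← pow_mul, Nat.mul_comm]
  have hp2 : 2 ≤ p := hp.two_le
  have hq2 : 2 ≤ p ^ 9 := le_trans hp2 (Nat.le_self_pow (by norm_num) p)
  have hm : α + 1 ≠ 0 := by omega
  have hq7 : p ^ 9 % 7 = (p % 7) ^ 9 % 7 := Nat.pow_mod p 9 7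
  have hq3 : p ^ 3 % 7 = (p % 7) ^ 3 % 7 := Nat.pow_mod p 3 7
  have hqq : p ^ 2 % 7 = (p % 7) ^ 2 % 7 := Nat.pow_mod p 2 7
  have hple : p ≤ p ^ 2 := by nlinarith
  rw [hσ]
  have hr : p % 7 = 0 ∨ p % 7 = 1 ∨ p % 7 = 2 ∨ p % 7 = 3 ∨ p % 7 = 4 ∨ p % 7 = 5 ∨
      p % 7 = 6 := by omega
  rcases hr with h | h | h | h | h | h | h <;> rw [h] at hq7 hq3 hqq <;>
      norm_num at hq7 hq3 hqq
  · rw [val_geom_zero hq7]; simp [h]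
  · rw [val_geom_one hq2 hq7 hm]; simp [h]
  · rw [val_geom_one hq2 hq7 hm]; simp [h]
  · by_cases he : 2 ∣ α + 1
    · rw [val_geom_negone_even hq2 hq7 hm he, val_q_add_one hp2 hq3,
        padicValNat.eq_zero_of_not_dvd (by omega : ¬ (7:ℕ) ∣ p + 1)]
      simp [h, he, Nat.add_comm]
    · rw [val_geom_negone_odd hq7 he]
      simp [h, he]
  · rw [val_geom_one hq2 hq7 hm]; simp [h]
  · by_cases he : 2 ∣ α + 1
    · rw [val_geom_negone_even hq2 hq7 hm he, val_q_add_one hp2 hq3,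
        padicValNat.eq_zero_of_not_dvd (by omega : ¬ (7:ℕ) ∣ p + 1)]
      simp [h, he, Nat.add_comm]
    · rw [val_geom_negone_odd hq7 he]
      simp [h, he]
  · by_cases he : 2 ∣ α + 1
    · rw [val_geom_negone_even hq2 hq7 hm he, val_q_add_one hp2 hq3,
        padicValNat.eq_zero_of_not_dvd (by omega : ¬ (7:ℕ) ∣ p ^ 2 - p + 1)]
      simp [h, he, Nat.add_comm]
    · rw [val_geom_negone_odd hq7 he]
      simp [h, he]

private lemma padicValNat_prod' {ι : Type*} (s : Finset ι) (f : ι → ℕ)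
    (hf : ∀ i ∈ s, f i ≠ 0) :
    padicValNat 7 (∏ i ∈ s, f i) = ∑ i ∈ s, padicValNat 7 (f i) := by
  classical
  induction s using Finset.induction_on with
  | empty => simp
  | @insert a t ha ih =>
    rw [Finset.prod_insert ha, Finset.sum_insert ha,
      padicValNat.mul (hf a (Finset.mem_insert_self a t))
        (Finset.prod_ne_zero_iff.mpr fun i hi => hf i (Finset.mem_insert_of_mem hi)),
      ih fun i hi => hf i (Finset.mem_insert_of_mem hi)]

private lemma sigma_ne_zero' (m : ℕ) (hm : m ≠ 0) : sigma 9 m ≠ 0 := by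
  rw [sigma_apply]
  have h1 : 1 ∈ m.divisors := Nat.one_mem_divisors.mpr hm
  have := Finset.single_le_sum (f := fun d : ℕ => d ^ 9) (fun d _ => Nat.zero_le _) h1
  simp only [one_pow] at this
  omega

/-- Example: `v_7(σ_9(n))` formula. -/
theorem valuation_sigma_nine_seven (n : ℕ) (hn : 2 ≤ n) :
    padicValNat 7 (sigma 9 n) =
      (∑ p ∈ n.primeFactors.filter (fun p : ℕ => p % 7 = 1 ∨ p % 7 = 2 ∨ p % 7 = 4),
          padicValNat 7 (n.factorization p + 1)) +
      (∑ p ∈ n.primeFactors.filter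
          (fun p : ℕ => (p % 7 = 3 ∨ p % 7 = 5) ∧ 2 ∣ n.factorization p + 1),
        (padicValNat 7 (n.factorization p + 1) + padicValNat 7 (p ^ 2 - p + 1))) +
      ∑ p ∈ n.primeFactors.filter
          (fun p : ℕ => p % 7 = 6 ∧ 2 ∣ n.factorization p + 1),
        (padicValNat 7 (n.factorization p + 1) + padicValNat 7 (p + 1)) := by
  have hn0 : n ≠ 0 := by omega
  rw [isMultiplicative_sigma.multiplicative_factorization _ hn0,
    Nat.prod_factorization_eq_prod_primeFactors,
    padicValNat_prod' _ _ (fun p hp =>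
      sigma_ne_zero' _ (pow_ne_zero _ (Nat.pos_of_mem_primeFactors hp).ne')),
    Finset.sum_congr rfl (fun p hp => key p (n.factorization p)
      (Nat.prime_of_mem_primeFactors hp)
      (Nat.Prime.factorization_pos_of_dvd (Nat.prime_of_mem_primeFactors hp) hn0 (Nat.dvd_of_mem_primeFactors hp)).ne'),
    Finset.sum_add_distrib, Finset.sum_add_distrib,
    Finset.sum_filter, Finset.sum_filter, Finset.sum_filter]
end
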